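/- Let R₁ and R₂ be finite connected simple graphs, each with at least two vertices, such that V(R₁) ∩ V(R₂) = ∅. Let ℰ be a partition of E(R₁) ∪ E(R₂) into nonempty sets, and let ℰ₀ be the collection of members of ℰ that intersect both E(R₁) and E(R₂). Then Σ_{E ∈ ℰ} (‖E‖ − 1) ≥ |V(R₁)| + |V(R₂)| − 2 + |ℰ₀|. -/
import Mathlib

open Finset

/-- `‖E‖`: the number of vertices incident to at least one edge of `E`. -/
def nodeCount {V : Type*} [Fintype V] [DecidableEq V] (E : Finset (Sym2 V)) : ℕ :=
  (Finset.univ.filter (fun v => ∃ e ∈ E, v ∈ e)).card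

namespace PartitionAux

variable {W : Type*} [Fintype W] [DecidableEq W]

def supp (E : Finset (Sym2 W)) : Finset W :=
  Finset.univ.filter (fun v => ∃ e ∈ E, v ∈ e)

lemma mem_supp {E : Finset (Sym2 W)} {v : W} : v ∈ supp E ↔ ∃ e ∈ E, v ∈ e := by
  simp [supp]

lemma nodeCount_eq (E : Finset (Sym2 W)) : nodeCount E = (supp E).card := rfl

lemma supp_union (A B : Finset (Sym2 W)) : supp (A ∪ B) = supp A ∪ supp B := by
  ext v
  simp only [mem_supp, Finset.mem_union]
  constructor
  · rintro ⟨e, he | he, hv⟩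
    · exact Or.inl ⟨e, he, hv⟩
    · exact Or.inr ⟨e, he, hv⟩
  · rintro (⟨e, he, hv⟩ | ⟨e, he, hv⟩)
    · exact ⟨e, Or.inl he, hv⟩
    · exact ⟨e, Or.inr he, hv⟩

lemma supp_mono {A B : Finset (Sym2 W)} (h : A ⊆ B) : supp A ⊆ supp B := by
  intro v hv
  rw [mem_supp] at hv ⊢
  obtain ⟨e, he, hv⟩ := hv
  exact ⟨e, h he, hv⟩

lemma supp_nonempty {A : Finset (Sym2 W)} (h : A.Nonempty) : (supp A).Nonempty := by
  obtain ⟨e, he⟩ := h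
  exact ⟨e.out.1, mem_supp.2 ⟨e, he, Sym2.out_fst_mem e⟩⟩

lemma nodeCount_pos {A : Finset (Sym2 W)} (h : A.Nonempty) : 1 ≤ nodeCount A := by
  rw [nodeCount_eq]
  exact Finset.card_pos.2 (supp_nonempty h)

lemma nodeCount_union_le {A B : Finset (Sym2 W)} {v : W}
    (hvA : v ∈ supp A) (hvB : v ∈ supp B) :
    nodeCount (A ∪ B) + 1 ≤ nodeCount A + nodeCount B := by
  simp only [nodeCount_eq, supp_union]
  have h1 : 1 ≤ (supp A ∩ supp B).card :=
    Finset.card_pos.2 ⟨v, Finset.mem_inter.2 ⟨hvA, hvB⟩⟩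
  have h2 := Finset.card_union_add_card_inter (supp A) (supp B)
  omega

/-- The key lemma: if `F` is a "connected" nonempty edge set, then for any partition `𝒜`
of `F` into nonempty parts, `Σ (nodeCount A − 1) ≥ |supp F| − 1`. -/
lemma key (n : ℕ) : ∀ (F : Finset (Sym2 W)), F.Nonempty →
    (∀ s : Finset W, s.Nonempty → s ⊂ supp F →
      ∃ e ∈ F, (∃ u ∈ s, u ∈ e) ∧ (∃ v, v ∉ s ∧ v ∈ e)) →
    ∀ (𝒜 : Finset (Finset (Sym2 W))), 𝒜.card = n →
    (∀ A ∈ 𝒜, A.Nonempty) →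
    (∀ A ∈ 𝒜, ∀ A' ∈ 𝒜, A ≠ A' → Disjoint A A') →
    𝒜.sup id = F →
    (supp F).card - 1 ≤ ∑ A ∈ 𝒜, (nodeCount A - 1) := by
  induction n using Nat.strong_induction_on with
  | _ n ih =>
    intro F hFne hcross 𝒜 hcard hne hdisj hsup
    -- 𝒜 is nonempty
    have h𝒜ne : 𝒜.Nonempty := by
      rcases Finset.eq_empty_or_nonempty 𝒜 with h | h
      · rw [h] at hsup; simp at hsup; rw [← hsup] at hFne
        exact absurd hFne (by simp)
      · exact h
    obtain ⟨A, hA⟩ := h𝒜ne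
    have hAF : A ⊆ F := by
      rw [← hsup]; exact Finset.le_sup (f := id) hA
    have hsuppAF : supp A ⊆ supp F := supp_mono hAF
    by_cases hfull : supp A = supp F
    · -- A alone covers everything
      have : (supp F).card - 1 ≤ nodeCount A - 1 := by
        rw [nodeCount_eq, hfull]
      calc (supp F).card - 1 ≤ nodeCount A - 1 := this
        _ ≤ ∑ A ∈ 𝒜, (nodeCount A - 1) :=
          Finset.single_le_sum (f := fun A => nodeCount A - 1) (fun _ _ => Nat.zero_le _) hA
    · -- supp A is a proper nonempty subset; find a crossing edge
      have hssub : supp A ⊂ supp F := lt_of_le_of_ne hsuppAF hfull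
      obtain ⟨e, heF, ⟨u, huA, hue⟩, ⟨v, hvA, hve⟩⟩ :=
        hcross (supp A) (supp_nonempty (hne A hA)) hssub
      -- e belongs to some part A'
      have : ∃ A' ∈ 𝒜, e ∈ A' := by
        have : e ∈ 𝒜.sup id := hsup ▸ heF
        simpa using Finset.mem_sup.1 this
      obtain ⟨A', hA', heA'⟩ := this
      have hAA' : A ≠ A' := by
        rintro rfl
        exact hvA (mem_supp.2 ⟨e, heA', hve⟩)
      have huA' : u ∈ supp A' := mem_supp.2 ⟨e, heA', hue⟩
      -- merge A and A'
      set B := A ∪ A' with hB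
      set 𝒜' : Finset (Finset (Sym2 W)) := insert B ((𝒜.erase A).erase A') with h𝒜'
      have hBnotin : B ∉ (𝒜.erase A).erase A' := by
        intro hmem
        have hC : B ∈ 𝒜 := Finset.mem_of_mem_erase (Finset.mem_of_mem_erase hmem)
        have hBA : B ≠ A := fun h => (Finset.ne_of_mem_erase (Finset.mem_of_mem_erase hmem)) h
        have := hdisj B hC A hA hBA
        have : Disjoint A A := this.mono_left (Finset.subset_union_left)
        obtain ⟨x, hx⟩ := hne A hA
        exact (Finset.disjoint_left.1 this hx) hx
      have hA'erase : A' ∈ 𝒜.erase A := Finset.mem_erase.2 ⟨fun h => hAA' h.symm, hA'⟩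
      have hcard' : 𝒜'.card = n - 1 ∧ 1 ≤ n := by
        constructor
        · rw [h𝒜', Finset.card_insert_of_notMem hBnotin,
            Finset.card_erase_of_mem hA'erase, Finset.card_erase_of_mem hA, hcard]
          have h2 : 2 ≤ 𝒜.card := by
            have := Finset.one_lt_card.2 ⟨A, hA, A', hA', hAA'⟩
            omega
          omega
        · rw [← hcard]; exact Finset.card_pos.2 ⟨A, hA⟩
      -- 𝒜' properties
      have hmem' : ∀ C ∈ 𝒜', C = B ∨ (C ∈ 𝒜 ∧ C ≠ A ∧ C ≠ A') := by
        intro C hC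
        rcases Finset.mem_insert.1 hC with h | h
        · exact Or.inl h
        · obtain ⟨hCA', hC2⟩ := Finset.mem_erase.1 h
          obtain ⟨hCA, hC3⟩ := Finset.mem_erase.1 hC2
          exact Or.inr ⟨hC3, hCA, hCA'⟩
      have hne' : ∀ C ∈ 𝒜', C.Nonempty := by
        intro C hC
        rcases hmem' C hC with rfl | ⟨h, _, _⟩
        · exact (hne A hA).mono Finset.subset_union_left
        · exact hne C h
      have hBdisj : ∀ C ∈ 𝒜, C ≠ A → C ≠ A' → Disjoint B C := by
        intro C hC h1 h2
        exact Finset.disjoint_union_left.2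
          ⟨hdisj A hA C hC (fun h => h1 h.symm), hdisj A' hA' C hC (fun h => h2 h.symm)⟩
      have hdisj' : ∀ C ∈ 𝒜', ∀ C' ∈ 𝒜', C ≠ C' → Disjoint C C' := by
        intro C hC C' hC' hCC'
        rcases hmem' C hC with rfl | ⟨h, hc1, hc2⟩
        · rcases hmem' C' hC' with rfl | ⟨h', hc1', hc2'⟩
          · exact absurd rfl hCC'
          · exact hBdisj C' h' hc1' hc2'
        · rcases hmem' C' hC' with rfl | ⟨h', hc1', hc2'⟩
          · exact (hBdisj C h hc1 hc2).symm
          · exact hdisj C h C' h' hCC'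
      have hsup' : 𝒜'.sup id = F := by
        rw [← hsup]
        apply le_antisymm
        · apply Finset.sup_le
          intro C hC
          rcases hmem' C hC with rfl | ⟨h, _, _⟩
          · exact Finset.union_subset (Finset.le_sup (f := id) hA) (Finset.le_sup (f := id) hA')
          · exact Finset.le_sup (f := id) h
        · apply Finset.sup_le
          intro C hC
          by_cases h1 : C = A
          · subst h1
            exact le_trans (Finset.subset_union_left (s₂ := A'))
              (Finset.le_sup (f := id) (Finset.mem_insert_self B _))
          by_cases h2 : C = A'
          · subst h2
            exact le_trans (Finset.subset_union_right (s₁ := A))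
              (Finset.le_sup (f := id) (Finset.mem_insert_self B _))
          · exact Finset.le_sup (f := id) (Finset.mem_insert.2 (Or.inr
              (Finset.mem_erase.2 ⟨h2, Finset.mem_erase.2 ⟨h1, hC⟩⟩)))
      have hIH := ih (n - 1) (by omega) F hFne hcross 𝒜' hcard'.1 hne' hdisj' hsup'
      -- compare the sums
      have hsum : ∑ C ∈ 𝒜', (nodeCount C - 1) ≤ ∑ C ∈ 𝒜, (nodeCount C - 1) := by
        rw [h𝒜', Finset.sum_insert hBnotin]
        have hsplit : ∑ C ∈ 𝒜, (nodeCount C - 1) =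
            (nodeCount A - 1) + ((nodeCount A' - 1) +
              ∑ C ∈ (𝒜.erase A).erase A', (nodeCount C - 1)) := by
          rw [← Finset.add_sum_erase _ _ hA, ← Finset.add_sum_erase _ _ hA'erase]
        rw [hsplit]
        have hle := nodeCount_union_le huA' huA
        have h1 := nodeCount_pos (hne A hA)
        have h2 := nodeCount_pos (hne A' hA')
        have : nodeCount B - 1 ≤ (nodeCount A - 1) + (nodeCount A' - 1) := by
          have : nodeCount B = nodeCount (A' ∪ A) := by rw [hB, Finset.union_comm]
          omega
        omega
      exact le_trans hIH hsum

lemma exists_adj {V : Type*} (R : SimpleGraph V) (hconn : R.Connected)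
    {v w : V} (hvw : v ≠ w) : ∃ x, R.Adj v x := by
  obtain ⟨p⟩ := hconn.preconnected v w
  obtain ⟨d, _, hd1, hd2⟩ := p.exists_boundary_dart ({v} : Set V) rfl (by simpa using hvw.symm)
  rw [Set.mem_singleton_iff] at hd1
  exact ⟨d.snd, hd1 ▸ d.adj⟩

lemma side_bound {V : Type*} [Fintype V] [DecidableEq V]
    (R : SimpleGraph V) [DecidableRel R.Adj] (hconn : R.Connected)
    (hcard : 2 ≤ Fintype.card V) (f : V → W) (hf : Function.Injective f)
    (F : Finset (Sym2 W)) (hF : F = R.edgeFinset.image (Sym2.map f))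
    (𝒜 : Finset (Finset (Sym2 W))) (hne : ∀ A ∈ 𝒜, A.Nonempty)
    (hdisj : ∀ A ∈ 𝒜, ∀ A' ∈ 𝒜, A ≠ A' → Disjoint A A')
    (hsup : 𝒜.sup id = F) :
    Fintype.card V - 1 ≤ ∑ A ∈ 𝒜, (nodeCount A - 1) := by
  have hadj : ∀ v : V, ∃ x, R.Adj v x := by
    intro v
    obtain ⟨w, hw⟩ := Fintype.exists_ne_of_one_lt_card (by omega) v
    exact exists_adj R hconn hw.symm
  have hedge : ∀ v x : V, R.Adj v x → Sym2.map f s(v, x) ∈ F := by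
    intro v x h
    rw [hF]
    exact Finset.mem_image_of_mem _ (by simp [SimpleGraph.mem_edgeFinset, h])
  have hsuppF : supp F = Finset.univ.image f := by
    ext y
    simp only [mem_supp, Finset.mem_image, Finset.mem_univ, true_and]
    constructor
    · rintro ⟨e, he, hy⟩
      rw [hF] at he
      obtain ⟨e', _, rfl⟩ := Finset.mem_image.1 he
      obtain ⟨z, _, rfl⟩ := Sym2.mem_map.1 hy
      exact ⟨z, rfl⟩
    · rintro ⟨v, rfl⟩
      obtain ⟨x, hx⟩ := hadj v
      exact ⟨Sym2.map f s(v, x), hedge v x hx, Sym2.mem_map.2 ⟨v, by simp, rfl⟩⟩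
  have hcards : (supp F).card = Fintype.card V := by
    rw [hsuppF, Finset.card_image_of_injective _ hf, Finset.card_univ]
  have hFne : F.Nonempty := by
    have : Nonempty V := Fintype.card_pos_iff.1 (by omega)
    obtain ⟨v⟩ := this
    obtain ⟨x, hx⟩ := hadj v
    exact ⟨_, hedge v x hx⟩
  have hcross : ∀ s : Finset W, s.Nonempty → s ⊂ supp F →
      ∃ e ∈ F, (∃ u ∈ s, u ∈ e) ∧ (∃ v, v ∉ s ∧ v ∈ e) := by
    intro s hsne hssub
    obtain ⟨x, hx⟩ := hsne
    have hxF : x ∈ supp F := hssub.1 hx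
    rw [hsuppF] at hxF
    obtain ⟨u, _, rfl⟩ := Finset.mem_image.1 hxF
    obtain ⟨y, hyF, hys⟩ := Finset.exists_of_ssubset hssub
    rw [hsuppF] at hyF
    obtain ⟨w, _, rfl⟩ := Finset.mem_image.1 hyF
    obtain ⟨p⟩ := hconn.preconnected u w
    obtain ⟨d, _, hd1, hd2⟩ := p.exists_boundary_dart ({a | f a ∈ s} : Set V) hx hys
    refine ⟨Sym2.map f s(d.fst, d.snd), hedge _ _ d.adj,
      ⟨f d.fst, hd1, Sym2.mem_map.2 ⟨d.fst, Sym2.mem_mk_left _ _, rfl⟩⟩,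
      ⟨f d.snd, hd2, Sym2.mem_map.2 ⟨d.snd, Sym2.mem_mk_right _ _, rfl⟩⟩⟩
  have := key 𝒜.card F hFne hcross 𝒜 rfl hne hdisj hsup
  omega


end PartitionAux

section MainProof
open Finset PartitionAux

/-- Let `R₁` and `R₂` be finite connected simple graphs, each with at least
two vertices, on disjoint vertex sets (realized here as the two summands of `V₁ ⊕ V₂`).
Let `ℰ` be a partition of `E(R₁) ∪ E(R₂)` into nonempty sets and let `ℰ₀` be the collection
of members of `ℰ` that intersect both `E(R₁)` and `E(R₂)`. Then
`Σ_{E ∈ ℰ} (‖E‖ − 1) ≥ |V(R₁)| + |V(R₂)| − 2 + |ℰ₀|`. -/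
theorem partition_two_disjoint_graphs_sum_nodeCount_sub_one_ge
    {V₁ V₂ : Type*} [Fintype V₁] [DecidableEq V₁] [Fintype V₂] [DecidableEq V₂]
    (R₁ : SimpleGraph V₁) [DecidableRel R₁.Adj] (R₂ : SimpleGraph V₂) [DecidableRel R₂.Adj]
    (hconn₁ : R₁.Connected) (hconn₂ : R₂.Connected)
    (hcard₁ : 2 ≤ Fintype.card V₁) (hcard₂ : 2 ≤ Fintype.card V₂)
    (F₁ F₂ : Finset (Sym2 (V₁ ⊕ V₂)))
    (hF₁ : F₁ = R₁.edgeFinset.image (Sym2.map Sum.inl))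
    (hF₂ : F₂ = R₂.edgeFinset.image (Sym2.map Sum.inr))
    (ℰ : Finset (Finset (Sym2 (V₁ ⊕ V₂))))
    (hne : ∀ E ∈ ℰ, E.Nonempty)
    (hdisj : ∀ E ∈ ℰ, ∀ E' ∈ ℰ, E ≠ E' → Disjoint E E')
    (hcover : ℰ.sup id = F₁ ∪ F₂)
    (ℰ₀ : Finset (Finset (Sym2 (V₁ ⊕ V₂))))
    (hℰ₀ : ℰ₀ = ℰ.filter (fun E => (E ∩ F₁).Nonempty ∧ (E ∩ F₂).Nonempty)) :
    Fintype.card V₁ + Fintype.card V₂ - 2 + ℰ₀.card ≤ ∑ E ∈ ℰ, (nodeCount E - 1) := by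
  classical
  -- every part splits as a disjoint union of its F₁-part and F₂-part
  have hsub : ∀ E ∈ ℰ, E ⊆ F₁ ∪ F₂ := by
    intro E hE
    rw [← hcover]
    exact Finset.le_sup (f := id) hE
  have hEsplit : ∀ E ∈ ℰ, E = (E ∩ F₁) ∪ (E ∩ F₂) := by
    intro E hE
    rw [← Finset.inter_union_distrib_left, Finset.inter_eq_left.2 (hsub E hE)]
  have hinl : ∀ (A : Finset (Sym2 (V₁ ⊕ V₂))), A ⊆ F₁ →
      ∀ x ∈ supp A, ∃ u, x = Sum.inl u := by
    intro A hA x hx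
    obtain ⟨e, he, hxe⟩ := mem_supp.1 hx
    have := hA he
    rw [hF₁] at this
    obtain ⟨e', _, rfl⟩ := Finset.mem_image.1 this
    obtain ⟨z, _, rfl⟩ := Sym2.mem_map.1 hxe
    exact ⟨z, rfl⟩
  have hinr : ∀ (A : Finset (Sym2 (V₁ ⊕ V₂))), A ⊆ F₂ →
      ∀ x ∈ supp A, ∃ u, x = Sum.inr u := by
    intro A hA x hx
    obtain ⟨e, he, hxe⟩ := mem_supp.1 hx
    have := hA he
    rw [hF₂] at this
    obtain ⟨e', _, rfl⟩ := Finset.mem_image.1 this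
    obtain ⟨z, _, rfl⟩ := Sym2.mem_map.1 hxe
    exact ⟨z, rfl⟩
  have hnc : ∀ E ∈ ℰ, nodeCount E = nodeCount (E ∩ F₁) + nodeCount (E ∩ F₂) := by
    intro E hE
    have hd : Disjoint (supp (E ∩ F₁)) (supp (E ∩ F₂)) := by
      rw [Finset.disjoint_left]
      intro x hx1 hx2
      obtain ⟨u, rfl⟩ := hinl _ Finset.inter_subset_right x hx1
      obtain ⟨w, hw⟩ := hinr _ Finset.inter_subset_right _ hx2
      exact Sum.inl_ne_inr hw
    conv_lhs => rw [nodeCount_eq, hEsplit E hE, supp_union]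
    rw [Finset.card_union_of_disjoint hd, nodeCount_eq, nodeCount_eq]
  have hnc0 : nodeCount (∅ : Finset (Sym2 (V₁ ⊕ V₂))) = 0 := by
    rw [nodeCount_eq]
    simp [supp]
  -- per-part decomposition of the summand
  have hterm : ∀ E ∈ ℰ, nodeCount E - 1 =
      (if (E ∩ F₁).Nonempty then nodeCount (E ∩ F₁) - 1 else 0)
      + (if (E ∩ F₂).Nonempty then nodeCount (E ∩ F₂) - 1 else 0)
      + (if (E ∩ F₁).Nonempty ∧ (E ∩ F₂).Nonempty then 1 else 0) := by
    intro E hE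
    have h := hnc E hE
    by_cases h1 : (E ∩ F₁).Nonempty <;> by_cases h2 : (E ∩ F₂).Nonempty
    · have p1 := nodeCount_pos h1
      have p2 := nodeCount_pos h2
      simp only [h1, h2, if_true, and_self]
      omega
    · have e2 : E ∩ F₂ = ∅ := Finset.not_nonempty_iff_eq_empty.1 h2
      rw [e2, hnc0] at h
      simp only [h1, h2, if_true, if_false, and_false]
      omega
    · have e1 : E ∩ F₁ = ∅ := Finset.not_nonempty_iff_eq_empty.1 h1
      rw [e1, hnc0] at h
      simp only [h1, h2, if_true, if_false, false_and]
      omega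
    · exfalso
      have e1 : E ∩ F₁ = ∅ := Finset.not_nonempty_iff_eq_empty.1 h1
      have e2 : E ∩ F₂ = ∅ := Finset.not_nonempty_iff_eq_empty.1 h2
      have := hEsplit E hE
      rw [e1, e2] at this
      simp at this
      exact (hne E hE).ne_empty this
  have hsumsplit : ∑ E ∈ ℰ, (nodeCount E - 1) =
      (∑ E ∈ ℰ.filter (fun E => (E ∩ F₁).Nonempty), (nodeCount (E ∩ F₁) - 1))
      + (∑ E ∈ ℰ.filter (fun E => (E ∩ F₂).Nonempty), (nodeCount (E ∩ F₂) - 1))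
      + ℰ₀.card := by
    rw [Finset.sum_congr rfl hterm, Finset.sum_add_distrib, Finset.sum_add_distrib,
      Finset.sum_filter, Finset.sum_filter, hℰ₀, Finset.card_filter]
  -- the side bounds
  have hside : ∀ (F : Finset (Sym2 (V₁ ⊕ V₂))), F ⊆ F₁ ∪ F₂ → (F₁ ∪ F₂ ⊆ F₁ ∪ F₂) →
      True := fun _ _ _ => trivial
  have hbound : ∀ (F : Finset (Sym2 (V₁ ⊕ V₂))), (∀ e ∈ F₁ ∪ F₂, e ∈ ℰ.sup id) := by
    intro F e he
    rw [hcover]; exact he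
  have hside₁ : Fintype.card V₁ - 1 ≤
      ∑ E ∈ ℰ.filter (fun E => (E ∩ F₁).Nonempty), (nodeCount (E ∩ F₁) - 1) := by
    set 𝒜₁ := (ℰ.filter (fun E => (E ∩ F₁).Nonempty)).image (· ∩ F₁) with h𝒜₁
    have hinj : ∀ E ∈ ℰ.filter (fun E => (E ∩ F₁).Nonempty),
        ∀ E' ∈ ℰ.filter (fun E => (E ∩ F₁).Nonempty), E ∩ F₁ = E' ∩ F₁ → E = E' := by
      intro E hE E' hE' heq
      by_contra hne'
      obtain ⟨hE1, hE2⟩ := Finset.mem_filter.1 hE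
      obtain ⟨hE1', _⟩ := Finset.mem_filter.1 hE'
      obtain ⟨x, hx⟩ := hE2
      have hx' : x ∈ E' ∩ F₁ := heq ▸ hx
      exact Finset.disjoint_left.1 (hdisj E hE1 E' hE1' hne')
        (Finset.mem_inter.1 hx).1 (Finset.mem_inter.1 hx').1
    have hsum_eq : ∑ A ∈ 𝒜₁, (nodeCount A - 1) =
        ∑ E ∈ ℰ.filter (fun E => (E ∩ F₁).Nonempty), (nodeCount (E ∩ F₁) - 1) :=
      Finset.sum_image hinj
    rw [← hsum_eq]
    apply side_bound R₁ hconn₁ hcard₁ Sum.inl Sum.inl_injective F₁ hF₁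
    · intro A hA
      obtain ⟨E, hE, rfl⟩ := Finset.mem_image.1 hA
      exact (Finset.mem_filter.1 hE).2
    · intro A hA A' hA' hAA'
      obtain ⟨E, hE, rfl⟩ := Finset.mem_image.1 hA
      obtain ⟨E', hE', rfl⟩ := Finset.mem_image.1 hA'
      have hEE' : E ≠ E' := fun h => hAA' (by rw [h])
      exact ((hdisj E (Finset.mem_filter.1 hE).1 E' (Finset.mem_filter.1 hE').1
        hEE').mono Finset.inter_subset_left Finset.inter_subset_left)
    · apply le_antisymm
      · apply Finset.sup_le
        intro A hA
        obtain ⟨E, _, rfl⟩ := Finset.mem_image.1 hA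
        exact Finset.inter_subset_right
      · intro e he
        have : e ∈ ℰ.sup id := by rw [hcover]; exact Finset.mem_union_left _ he
        obtain ⟨E, hE, heE⟩ := by simpa using Finset.mem_sup.1 this
        have hmem : e ∈ E ∩ F₁ := Finset.mem_inter.2 ⟨heE, he⟩
        have hEf : E ∈ ℰ.filter (fun E => (E ∩ F₁).Nonempty) :=
          Finset.mem_filter.2 ⟨hE, ⟨e, hmem⟩⟩
        exact Finset.mem_sup.2 ⟨_, Finset.mem_image_of_mem _ hEf, hmem⟩
  have hside₂ : Fintype.card V₂ - 1 ≤
      ∑ E ∈ ℰ.filter (fun E => (E ∩ F₂).Nonempty), (nodeCount (E ∩ F₂) - 1) := by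
    set 𝒜₂ := (ℰ.filter (fun E => (E ∩ F₂).Nonempty)).image (· ∩ F₂) with h𝒜₂
    have hinj : ∀ E ∈ ℰ.filter (fun E => (E ∩ F₂).Nonempty),
        ∀ E' ∈ ℰ.filter (fun E => (E ∩ F₂).Nonempty), E ∩ F₂ = E' ∩ F₂ → E = E' := by
      intro E hE E' hE' heq
      by_contra hne'
      obtain ⟨hE1, hE2⟩ := Finset.mem_filter.1 hE
      obtain ⟨hE1', _⟩ := Finset.mem_filter.1 hE'
      obtain ⟨x, hx⟩ := hE2
      have hx' : x ∈ E' ∩ F₂ := heq ▸ hx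
      exact Finset.disjoint_left.1 (hdisj E hE1 E' hE1' hne')
        (Finset.mem_inter.1 hx).1 (Finset.mem_inter.1 hx').1
    have hsum_eq : ∑ A ∈ 𝒜₂, (nodeCount A - 1) =
        ∑ E ∈ ℰ.filter (fun E => (E ∩ F₂).Nonempty), (nodeCount (E ∩ F₂) - 1) :=
      Finset.sum_image hinj
    rw [← hsum_eq]
    apply side_bound R₂ hconn₂ hcard₂ Sum.inr Sum.inr_injective F₂ hF₂
    · intro A hA
      obtain ⟨E, hE, rfl⟩ := Finset.mem_image.1 hA
      exact (Finset.mem_filter.1 hE).2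
    · intro A hA A' hA' hAA'
      obtain ⟨E, hE, rfl⟩ := Finset.mem_image.1 hA
      obtain ⟨E', hE', rfl⟩ := Finset.mem_image.1 hA'
      have hEE' : E ≠ E' := fun h => hAA' (by rw [h])
      exact ((hdisj E (Finset.mem_filter.1 hE).1 E' (Finset.mem_filter.1 hE').1
        hEE').mono Finset.inter_subset_left Finset.inter_subset_left)
    · apply le_antisymm
      · apply Finset.sup_le
        intro A hA
        obtain ⟨E, _, rfl⟩ := Finset.mem_image.1 hA
        exact Finset.inter_subset_right
      · intro e he
        have : e ∈ ℰ.sup id := by rw [hcover]; exact Finset.mem_union_right _ he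
        obtain ⟨E, hE, heE⟩ := by simpa using Finset.mem_sup.1 this
        have hmem : e ∈ E ∩ F₂ := Finset.mem_inter.2 ⟨heE, he⟩
        have hEf : E ∈ ℰ.filter (fun E => (E ∩ F₂).Nonempty) :=
          Finset.mem_filter.2 ⟨hE, ⟨e, hmem⟩⟩
        exact Finset.mem_sup.2 ⟨_, Finset.mem_image_of_mem _ hEf, hmem⟩
  rw [hsumsplit]
  omega

end MainProof
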